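/- The first coefficient (coefficient of v³) of the binary cubic form a_t n_u k_θ · x₋ equals t³ sin(2πθ)/√2, where x₋ = (v²w + w³)/√2, a_t = diag(t, 1/t), n_u is the lower-triangular unipotent with entry u, and k_θ is rotation by angle 2πθ. -/
import Mathlib

open Real Matrix

/-- The value of the binary cubic form with coefficient vector `x` at `(v,w)`. -/
noncomputable def cubicVal (x : Fin 4 → ℝ) (v w : ℝ) : ℝ :=
  x 0 * v^3 + x 1 * v^2 * w + x 2 * v * w^2 + x 3 * w^3

/-- `a_t = diag(t, 1/t)`. -/
noncomputable def aMat (t : ℝ) : Matrix (Fin 2) (Fin 2) ℝ := !![t, 0; 0, t⁻¹]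

/-- `n_u`, the lower-triangular unipotent with entry `u`. -/
def nMat (u : ℝ) : Matrix (Fin 2) (Fin 2) ℝ := !![1, 0; u, 1]

/-- `k_θ`, rotation by angle `2πθ`. -/
noncomputable def kMat (θ : ℝ) : Matrix (Fin 2) (Fin 2) ℝ :=
  !![Real.cos (2*π*θ), Real.sin (2*π*θ); -Real.sin (2*π*θ), Real.cos (2*π*θ)]

/-- The coefficient of `v³` in `a_t n_u k_θ · x₋` equals `t³ sin(2πθ)/√2`,
where `x₋ = (v²w + w³)/√2` and the action is `(g·x)(v,w) = x((v,w)g)`. -/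
theorem first_coeff_xminus (t u θ : ℝ) (ht : 0 < t) (y : Fin 4 → ℝ)
    (hy : ∀ v w : ℝ, cubicVal y v w
        = cubicVal ![0, 1 / Real.sqrt 2, 0, 1 / Real.sqrt 2]
            (v * (aMat t * nMat u * kMat θ) 0 0 + w * (aMat t * nMat u * kMat θ) 1 0)
            (v * (aMat t * nMat u * kMat θ) 0 1 + w * (aMat t * nMat u * kMat θ) 1 1)) :
    y 0 = t^3 * Real.sin (2*π*θ) / Real.sqrt 2 := by
  have h := hy 1 0
  simp only [cubicVal, aMat, nMat, kMat, Matrix.mul_apply, Fin.sum_univ_two] at h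
  simp [Matrix.cons_val_zero, Matrix.cons_val_one] at h
  have hpyth := Real.sin_sq_add_cos_sq (2*π*θ)
  field_simp at h ⊢
  linear_combination h + t^3 * Real.sin (2*π*θ) * hpyth
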